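/- (Stability bound for FTRL with linear losses) Let X ⊆ ℝ^N be compact convex, R twice continuously differentiable and strongly convex on X, η > 0, and L, l ∈ ℝ^N. Define x = argmin_{x∈X}(η⟨x, L⟩ + R(x)) and x' = argmin_{x∈X}(η⟨x, L + l⟩ + R(x)), assumed to lie in the interior of X. Then ⟨l, x⟩ − ⟨l, x'⟩ ≤ η·max_{y∈X} (‖l‖*_{∇²R(y)})², where ‖l‖*_{H} = √(⟨l, H^{−1} l⟩) denotes the dual local norm. -/

import Mathlib

open Finset Matrix

def dotN {N : ℕ} (a b : EuclideanSpace ℝ (Fin N)) : ℝ := ∑ i, a i * b i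

/-- The Hessian of `R` at `y` as an `N × N` matrix, via the second iterated derivative. -/
noncomputable def hessMat {N : ℕ} (R : EuclideanSpace ℝ (Fin N) → ℝ)
    (y : EuclideanSpace ℝ (Fin N)) : Matrix (Fin N) (Fin N) ℝ :=
  fun i j => iteratedFDeriv ℝ 2 R y ![EuclideanSpace.single i 1, EuclideanSpace.single j 1]

/-- The squared dual local norm `(‖l‖*_H)² = ⟨l, H⁻¹ l⟩`. -/
noncomputable def dualNormSq {N : ℕ} (H : Matrix (Fin N) (Fin N) ℝ) (l : Fin N → ℝ) : ℝ :=
  l ⬝ᵥ (H⁻¹ *ᵥ l)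

/-!
Write `u = x - x'` and `d = ⟨l, u⟩`. Since `x` and `x'` are interior minimizers, the gradients of
both objectives vanish there, so `∇R(x) - ∇R(x') = η l`. The mean value theorem for
`t ↦ ⟨∇R(x' + t u), u⟩` yields `ξ ∈ [x', x] ⊆ X` with `η d = uᵀ ∇²R(ξ) u`, and Cauchy–Schwarz in
the inner product given by `∇²R(ξ)` yields `d² ≤ (uᵀ ∇²R(ξ) u) · (‖l‖*_{∇²R(ξ)})²
= η d (‖l‖*_{∇²R(ξ)})²`, hence `d ≤ η (‖l‖*_{∇²R(ξ)})²`.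
-/

lemma dotN_eq_inner {N : ℕ} (a b : EuclideanSpace ℝ (Fin N)) : dotN a b = inner ℝ b a := by
  simp [dotN, EuclideanSpace.inner_eq_star_dotProduct, dotProduct]

lemma dotN_eq_dotProduct {N : ℕ} (a b : EuclideanSpace ℝ (Fin N)) :
    dotN a b = a.ofLp ⬝ᵥ b.ofLp :=
  rfl

theorem Matrix.PosDef.sq_dotProduct_le_mul_dualNormSq {N : ℕ} {H : Matrix (Fin N) (Fin N) ℝ}
    (hH : H.PosDef) (u l : Fin N → ℝ) :
    (l ⬝ᵥ u) ^ 2 ≤ (u ⬝ᵥ (H *ᵥ u)) * dualNormSq H l := by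
  set w := H⁻¹ *ᵥ l
  have hHw : H *ᵥ w = l := by
    rw [mulVec_mulVec, mul_nonsing_inv _ hH.det_pos.ne'.isUnit, one_mulVec]
  have hcs := LinearMap.BilinForm.apply_mul_apply_le_of_forall_zero_le (toLinearMap₂' ℝ H)
    (fun v => by simpa [toLinearMap₂'_apply'] using hH.posSemidef.dotProduct_mulVec_nonneg v) w u
  simp only [toLinearMap₂'_apply'] at hcs
  have hwu : w ⬝ᵥ (H *ᵥ u) = l ⬝ᵥ u := by
    rw [dotProduct_mulVec, ← mulVec_transpose, ← conjTranspose_eq_transpose_of_trivial,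
      hH.isHermitian.eq, hHw]
  rw [hwu, hHw, dotProduct_comm u, ← sq] at hcs
  simpa [dualNormSq, dotProduct_comm l, mul_comm] using hcs

theorem Matrix.PosDef.dualNormSq_nonneg {N : ℕ} {H : Matrix (Fin N) (Fin N) ℝ}
    (hH : H.PosDef) (l : Fin N → ℝ) : 0 ≤ dualNormSq H l := by
  simpa [dualNormSq] using hH.inv.posSemidef.dotProduct_mulVec_nonneg l

theorem ContinuousOn.dualNormSq {α : Type*} [TopologicalSpace α] {N : ℕ}
    {H : α → Matrix (Fin N) (Fin N) ℝ} {s : Set α} (hH : ContinuousOn H s)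
    (hdet : ∀ y ∈ s, (H y).det ≠ 0) (l : Fin N → ℝ) :
    ContinuousOn (fun y => dualNormSq (H y) l) s := by
  have hinv : ContinuousOn (fun y => (H y)⁻¹) s := fun y hy =>
    (continuousAt_matrix_inv _ (by
      simpa [Ring.inverse_eq_inv'] using continuousAt_inv₀ (hdet y hy))).comp_continuousWithinAt
      (hH y hy)
  exact (continuous_const.dotProduct (continuous_id.matrix_mulVec continuous_const)).comp_continuousOn
    hinv

theorem continuous_hessMat {N : ℕ} {R : EuclideanSpace ℝ (Fin N) → ℝ} (hR : ContDiff ℝ 2 R) :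
    Continuous (hessMat R) :=
  continuous_matrix fun _ _ => (continuous_eval_const _).comp (hR.continuous_iteratedFDeriv le_rfl)

theorem fderiv_fderiv_apply_eq_dotProduct_hessMat {N : ℕ} (R : EuclideanSpace ℝ (Fin N) → ℝ)
    (y u w : EuclideanSpace ℝ (Fin N)) :
    fderiv ℝ (fderiv ℝ R) y u w = u.ofLp ⬝ᵥ (hessMat R y *ᵥ w.ofLp) := by
  have hB : ∀ i j, hessMat R y i j
      = fderiv ℝ (fderiv ℝ R) y (EuclideanSpace.single i 1) (EuclideanSpace.single j 1) := by
    intro i j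
    simp [hessMat, iteratedFDeriv_two_apply]
  conv_lhs => rw [← (EuclideanSpace.basisFun (Fin N) ℝ).sum_repr u,
    ← (EuclideanSpace.basisFun (Fin N) ℝ).sum_repr w]
  simp only [EuclideanSpace.basisFun_repr, EuclideanSpace.basisFun_apply, map_sum, map_smul,
    _root_.sum_apply, _root_.smul_apply, smul_eq_mul, mul_sum,
    mul_left_comm, dotProduct, mulVec, hB, mul_comm]
  exact Finset.sum_comm

theorem exists_mem_segment_fderiv_sub_eq {E : Type*} [NormedAddCommGroup E] [NormedSpace ℝ E]
    {R : E → ℝ} (hR : Differentiable ℝ (fderiv ℝ R)) (a b : E) :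
    ∃ ξ ∈ segment ℝ a b, fderiv ℝ R b (b - a) - fderiv ℝ R a (b - a)
      = fderiv ℝ (fderiv ℝ R) ξ (b - a) (b - a) := by
  have hg : ∀ t : ℝ, HasDerivAt (fun t => fderiv ℝ R (AffineMap.lineMap a b t) (b - a))
      (fderiv ℝ (fderiv ℝ R) (AffineMap.lineMap a b t) (b - a) (b - a)) t := fun t => by
    simpa using ((hR _).hasFDerivAt.comp_hasDerivAt t AffineMap.hasDerivAt_lineMap).clm_apply
      (hasDerivAt_const t (b - a))
  obtain ⟨t, ht, heq⟩ := exists_hasDerivAt_eq_slope _ _ zero_lt_one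
    (fun t _ => (hg t).continuousAt.continuousWithinAt) (fun t _ => hg t)
  refine ⟨AffineMap.lineMap a b t, segment_eq_image_lineMap ℝ a b ▸
    Set.mem_image_of_mem _ (Set.Ioo_subset_Icc_self ht), ?_⟩
  simpa using heq.symm

theorem IsMinOn.fderiv_eq_neg_of_mem_interior {E : Type*} [NormedAddCommGroup E]
    [NormedSpace ℝ E] {A : E →L[ℝ] ℝ} {R : E → ℝ} {s : Set E} {x : E}
    (hmin : IsMinOn (fun z => A z + R z) s x) (hx : x ∈ interior s)
    (hR : DifferentiableAt ℝ R x) : fderiv ℝ R x = -A := by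
  have h := (hmin.isLocalMin (mem_interior_iff_mem_nhds.mp hx)).fderiv_eq_zero
  rw [fderiv_fun_add A.differentiableAt hR, A.fderiv] at h
  exact eq_neg_of_add_eq_zero_right h

theorem ftrl_stability_general {N : ℕ} (X : Set (EuclideanSpace ℝ (Fin N)))
    (hXcomp : IsCompact X) (hXconv : Convex ℝ X)
    (R : EuclideanSpace ℝ (Fin N) → ℝ) (hR : ContDiff ℝ 2 R)
    (hRpd : ∀ y ∈ X, (hessMat R y).PosDef)
    (η : ℝ) (hη : 0 < η) (L l : EuclideanSpace ℝ (Fin N))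
    (x x' : EuclideanSpace ℝ (Fin N))
    (hx : IsMinOn (fun z => η * dotN z L + R z) X x)
    (hx' : IsMinOn (fun z => η * dotN z (L + l) + R z) X x')
    (hxint : x ∈ interior X) (hx'int : x' ∈ interior X) :
    dotN l x - dotN l x' ≤ η * sSup ((fun y => dualNormSq (hessMat R y) l) '' X) := by
  have hgrad : ∀ {y K}, IsMinOn (fun z => η * dotN z K + R z) X y → y ∈ interior X →
      fderiv ℝ R y = -(η • innerSL ℝ K) := fun hmin hint =>
    IsMinOn.fderiv_eq_neg_of_mem_interior (by simpa [dotN_eq_inner] using hmin) hint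
      ((hR.differentiable two_ne_zero) _)
  obtain ⟨ξ, hξseg, hmvt⟩ :=
    exists_mem_segment_fderiv_sub_eq ((hR.fderiv_right le_rfl).differentiable one_ne_zero) x' x
  have hξX : ξ ∈ X := hXconv.segment_subset (interior_subset hx'int) (interior_subset hxint) hξseg
  rw [hgrad hx hxint, hgrad hx' hx'int, fderiv_fderiv_apply_eq_dotProduct_hessMat] at hmvt
  have hd : dotN l x - dotN l x' = l.ofLp ⬝ᵥ (x - x').ofLp := by
    simp [dotN_eq_dotProduct, dotProduct_sub]
  have hηd : η * (dotN l x - dotN l x') = (x - x').ofLp ⬝ᵥ (hessMat R ξ *ᵥ (x - x').ofLp) := by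
    rw [← hmvt]
    simp [dotN_eq_inner, inner_sub_right, real_inner_comm]
  have hcs := (hRpd ξ hξX).sq_dotProduct_le_mul_dualNormSq (x - x').ofLp l
  rw [← hd, ← hηd] at hcs
  have hbdd : BddAbove ((fun y => dualNormSq (hessMat R y) l) '' X) :=
    hXcomp.bddAbove_image ((continuous_hessMat hR).continuousOn.dualNormSq
      (fun y hy => (hRpd y hy).det_pos.ne') l)
  have hηD := mul_nonneg hη.le ((hRpd ξ hξX).dualNormSq_nonneg l)
  calc dotN l x - dotN l x' ≤ η * dualNormSq (hessMat R ξ) l := by nlinarith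
    _ ≤ η * sSup ((fun y => dualNormSq (hessMat R y) l) '' X) :=
        mul_le_mul_of_nonneg_left (le_csSup hbdd ⟨ξ, hξX, rfl⟩) hη.le

/-- FTRL stability with linear losses: if `x` and `x'` are the FTRL iterates for cumulative
losses `L` and `L + l` respectively (both in the interior of `X`), then
`⟨l, x⟩ − ⟨l, x'⟩ ≤ η · max_{y ∈ X} (‖l‖*_{∇²R(y)})²`. -/
theorem ftrl_stability {N : ℕ} (X : Set (EuclideanSpace ℝ (Fin N)))
    (hXcomp : IsCompact X) (hXconv : Convex ℝ X) (hXne : X.Nonempty)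
    (R : EuclideanSpace ℝ (Fin N) → ℝ) (hR : ContDiff ℝ 2 R)
    (hRsc : ∃ m : ℝ, 0 < m ∧ StrongConvexOn X m R)
    (hRpd : ∀ y ∈ X, (hessMat R y).PosDef)
    (η : ℝ) (hη : 0 < η) (L l : EuclideanSpace ℝ (Fin N))
    (x x' : EuclideanSpace ℝ (Fin N))
    (hx : IsMinOn (fun z => η * dotN z L + R z) X x)
    (hx' : IsMinOn (fun z => η * dotN z (L + l) + R z) X x')
    (hxint : x ∈ interior X) (hx'int : x' ∈ interior X) :
    dotN l x - dotN l x' ≤ η * sSup ((fun y => dualNormSq (hessMat R y) l) '' X) :=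
  ftrl_stability_general X hXcomp hXconv R hR hRpd η hη L l x x' hx hx' hxint hx'int
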